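/- arXiv:2511.21200 — 10 statements merged into one kernel-verified Lean document; each statement's English description precedes it below -/
import Mathlib

section
/- Let R be a commutative ring with identity that is not local, and let n be a positive integer. Then a proper ideal I of R is an n-OA ideal if and only if I is a prime ideal. -/
/-! If `x * y ∈ I` with `x, y` nonunits and `y ∉ I`, the `n`-OA property applied to the product
`x * z ^ (n - 1) * y` of `n + 1` nonunits gives `x * z ^ (n - 1) ∈ I` for every nonunit `z`.
A non-local ring has nonunits `u + v = 1`; as `u ^ (n - 1)` and `v ^ (n - 1)` are again coprime,
`x ∈ I`. -/

/-- A proper ideal `I` is an `n`-OA ideal (`n`-`1`-absorbing prime) if whenever a product of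
`n+1` nonunits lies in `I`, then the product of the first `n` of them lies in `I` or the last
one lies in `I`. -/
def IsNOAIdeal {R : Type*} [CommRing R] (n : ℕ) (I : Ideal R) : Prop :=
  I ≠ ⊤ ∧ ∀ a : Fin (n + 1) → R, (∀ i, ¬IsUnit (a i)) → (∏ i, a i) ∈ I →
    (∏ i : Fin n, a i.castSucc) ∈ I ∨ a (Fin.last n) ∈ I

/-- An ideal has an `n`-OA-factorization if it is a product of finitely many `n`-OA ideals. -/
def HasNOAFactorization {R : Type*} [CommRing R] (n : ℕ) (I : Ideal R) : Prop :=
  ∃ (m : ℕ) (J : Fin m → Ideal R), 0 < m ∧ (∀ i, IsNOAIdeal n (J i)) ∧ I = ∏ i, J i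

/-- A ring is an `n`-OAF ring if every proper ideal has an `n`-OA-factorization. -/
def IsNOAFRing (R : Type*) [CommRing R] (n : ℕ) : Prop :=
  ∀ I : Ideal R, I ≠ ⊤ → HasNOAFactorization n I

/-- A general ZPI-ring: every proper ideal is a finite product of prime ideals. -/
def IsGeneralZPIRing (R : Type*) [CommRing R] : Prop :=
  ∀ I : Ideal R, I ≠ ⊤ →
    ∃ (m : ℕ) (J : Fin m → Ideal R), 0 < m ∧ (∀ i, (J i).IsPrime) ∧ I = ∏ i, J i

theorem exists_not_isUnit_add_eq_one {R : Type*} [CommRing R] [Nontrivial R]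
    (hnl : ¬IsLocalRing R) : ∃ u v : R, ¬IsUnit u ∧ ¬IsUnit v ∧ u + v = 1 := by
  by_contra! h
  exact hnl ⟨fun {a b} hab => or_iff_not_and_not.mpr fun hab' => h a b hab'.1 hab'.2 hab⟩

namespace IsNOAIdeal

variable {R : Type*} [CommRing R] {n : ℕ} {I : Ideal R}

theorem prod_mem_or_mem (hI : IsNOAIdeal n I) {a : Fin n → R} {y : R}
    (ha : ∀ i, ¬IsUnit (a i)) (hy : ¬IsUnit y) (h : (∏ i, a i) * y ∈ I) :
    (∏ i, a i) ∈ I ∨ y ∈ I := by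
  have hnu : ∀ i, ¬IsUnit (Fin.snoc (α := fun _ => R) a y i) :=
    Fin.lastCases (by simpa using hy) fun i => by simpa using ha i
  simpa using hI.2 (Fin.snoc a y) hnu (by simpa [Fin.prod_univ_castSucc] using h)

theorem mul_pow_mem_or_mem (hI : IsNOAIdeal (n + 1) I) {x y z : R} (hx : ¬IsUnit x)
    (hy : ¬IsUnit y) (hz : ¬IsUnit z) (h : x * y ∈ I) : x * z ^ n ∈ I ∨ y ∈ I := by
  have ha : ∀ i, ¬IsUnit (Fin.cons (α := fun _ => R) x (fun _ : Fin n => z) i) :=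
    Fin.cases hx fun _ => hz
  have hprod : ∏ i, Fin.cons (α := fun _ => R) x (fun _ : Fin n => z) i = x * z ^ n := by
    simp [Fin.prod_cons]
  have hmem : (∏ i, Fin.cons (α := fun _ => R) x (fun _ : Fin n => z) i) * y ∈ I := by
    rw [hprod, mul_right_comm]
    exact I.mul_mem_right _ h
  simpa only [hprod] using hI.prod_mem_or_mem ha hy hmem

theorem isPrime [Nontrivial R] (hnl : ¬IsLocalRing R) (hn : 0 < n) (hI : IsNOAIdeal n I) :
    I.IsPrime := by
  obtain ⟨m, rfl⟩ := Nat.exists_eq_add_one_of_ne_zero hn.ne'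
  obtain ⟨u, v, hu, hv, huv⟩ := exists_not_isUnit_add_eq_one hnl
  refine Ideal.isPrime_iff.mpr ⟨hI.1, fun {x y} hxy => ?_⟩
  by_cases hx : IsUnit x
  · exact .inr <| (Ideal.unit_mul_mem_iff_mem I hx).mp hxy
  by_cases hy : IsUnit y
  · exact .inl <| (Ideal.mul_unit_mem_iff_mem I hy).mp hxy
  refine or_iff_not_imp_right.mpr fun hyI => ?_
  have hxu := (hI.mul_pow_mem_or_mem hx hy hu hxy).resolve_right hyI
  have hxv := (hI.mul_pow_mem_or_mem hx hy hv hxy).resolve_right hyI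
  obtain ⟨a, b, hab⟩ : IsCoprime (u ^ m) (v ^ m) := IsCoprime.pow ⟨1, 1, by simpa using huv⟩
  have hx_eq : x = a * (x * u ^ m) + b * (x * v ^ m) := by linear_combination -x * hab
  rw [hx_eq]
  exact I.add_mem (I.mul_mem_left a hxu) (I.mul_mem_left b hxv)

end IsNOAIdeal

theorem Ideal.IsPrime.isNOAIdeal {R : Type*} [CommRing R] {I : Ideal R} (hI : I.IsPrime)
    (n : ℕ) : IsNOAIdeal n I :=
  ⟨hI.ne_top, fun a _ h => hI.mem_or_mem (by rwa [Fin.prod_univ_castSucc] at h)⟩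

theorem stmt0_general {R : Type*} [CommRing R] [Nontrivial R] (hnl : ¬IsLocalRing R)
    (n : ℕ) (hn : 0 < n) (I : Ideal R) :
    IsNOAIdeal n I ↔ I.IsPrime :=
  ⟨IsNOAIdeal.isPrime hnl hn, fun hI => hI.isNOAIdeal n⟩

theorem stmt0 {R : Type*} [CommRing R] [Nontrivial R] (hnl : ¬IsLocalRing R)
    (n : ℕ) (hn : 0 < n) (I : Ideal R) (hI : I ≠ ⊤) :
    IsNOAIdeal n I ↔ I.IsPrime :=
  stmt0_general hnl n hn I
end

section
/- If I is an n-OA ideal of a commutative ring R, then I has exactly one minimal prime, i.e., the set of prime ideals of R minimal over I is a singleton. -/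
/-!
If `x, y` are nonunits with `x * y ∈ I`, feeding the `n + 1` nonunits `x, …, x, y` to the `n`-OA
condition gives `x ^ n ∈ I` or `y ∈ I`. Applied to powers `x ^ k, y ^ k` this shows that `√I` is
prime, and an ideal with prime radical has `√I` as its only minimal prime.
-/

namespace IsNOAIdeal

variable {R : Type*} [CommRing R] {n : ℕ} {I : Ideal R}

theorem pow_mem_or_mem_of_pow_mul_mem (hI : IsNOAIdeal n I) {x y : R} (hx : ¬IsUnit x)
    (hy : ¬IsUnit y) (hxy : x ^ n * y ∈ I) : x ^ n ∈ I ∨ y ∈ I := by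
  set a : Fin (n + 1) → R := Fin.snoc (fun _ => x) y
  have hnonunit : ∀ i, ¬IsUnit (a i) :=
    Fin.lastCases (by simpa [a] using hy) fun i => by simpa [a] using hx
  simpa [a] using hI.2 a hnonunit (by simpa [a] using hxy)

theorem pow_mem_or_mem_of_mul_mem (hI : IsNOAIdeal n I) (hn : 0 < n) {x y : R} (hx : ¬IsUnit x)
    (hy : ¬IsUnit y) (hxy : x * y ∈ I) : x ^ n ∈ I ∨ y ∈ I := by
  refine hI.pow_mem_or_mem_of_pow_mul_mem hx hy ?_
  obtain ⟨m, rfl⟩ := Nat.exists_eq_add_one_of_ne_zero hn.ne'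
  simpa only [pow_succ, mul_assoc] using I.mul_mem_left (x ^ m) hxy

theorem isPrime_radical (hI : IsNOAIdeal n I) (hn : 0 < n) : I.radical.IsPrime := by
  refine ⟨Ideal.radical_eq_top.not.mpr hI.1, fun {x y} hxy => ?_⟩
  by_cases hx : IsUnit x
  · exact .inr ((Ideal.unit_mul_mem_iff_mem _ hx).mp hxy)
  by_cases hy : IsUnit y
  · exact .inl ((Ideal.unit_mul_mem_iff_mem _ hy).mp (mul_comm x y ▸ hxy))
  obtain ⟨k, hk⟩ := hxy
  have hk0 : k ≠ 0 := by
    rintro rfl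
    exact hI.1 ((Ideal.eq_top_iff_one I).mpr (pow_zero (x * y) ▸ hk))
  rw [mul_pow] at hk
  rcases hI.pow_mem_or_mem_of_mul_mem hn (mt (isUnit_pow_iff hk0).mp hx)
    (mt (isUnit_pow_iff hk0).mp hy) hk with h | h
  · exact .inl ⟨k * n, by rwa [pow_mul]⟩
  · exact .inr ⟨k, h⟩

theorem minimalPrimes_eq (hI : IsNOAIdeal n I) (hn : 0 < n) : I.minimalPrimes = {I.radical} := by
  have := hI.isPrime_radical hn
  rw [← Ideal.radical_minimalPrimes, Ideal.minimalPrimes_eq_subsingleton_self]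

end IsNOAIdeal

theorem stmt2_general {R : Type*} [CommRing R] (n : ℕ) (hn : 0 < n)
    (I : Ideal R) (hI : IsNOAIdeal n I) :
    ∃ P : Ideal R, I.minimalPrimes = {P} :=
  ⟨I.radical, hI.minimalPrimes_eq hn⟩

theorem stmt2 {R : Type*} [CommRing R] [Nontrivial R] (n : ℕ) (hn : 0 < n)
    (I : Ideal R) (hI : IsNOAIdeal n I) :
    ∃ P : Ideal R, I.minimalPrimes = {P} :=
  stmt2_general n hn I hI
end

section
/- If a proper ideal I of a commutative ring R can be written as a product of finitely many n-OA ideals, then the set of prime ideals minimal over I is finite. -/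
/-!
If `J` is `n`-OA with `n > 0` and `ab ∈ J`, applying the definition to `a, …, a, b` gives
`a ^ n ∈ J` or `b ∈ J`; hence `√J` is prime and is the only prime minimal over `J`. A prime
minimal over `J₁ ⋯ J_m` contains some `J_i`, so it is minimal over that `J_i`: the primes
minimal over an `n`-OA-factorization are among the `√J_i`.
-/

namespace Ideal

variable {R : Type*} [CommSemiring R]

theorem minimalPrimes_prod_subset {ι : Type*} (s : Finset ι) (J : ι → Ideal R) :
    (∏ i ∈ s, J i).minimalPrimes ⊆ ⋃ i ∈ s, (J i).minimalPrimes := by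
  intro p hp
  have hpPrime : p.IsPrime := hp.1.1
  obtain ⟨i, hi, hJp⟩ := hpPrime.prod_le.mp hp.1.2
  obtain ⟨q, hq, hqp⟩ := exists_minimalPrimes_le hJp
  have hprod_le : ∏ j ∈ s, J j ≤ q := prod_le_inf.trans ((Finset.inf_le hi).trans hq.1.2)
  have hpq : p ≤ q := hp.2 ⟨hq.1.1, hprod_le⟩ hqp
  exact Set.mem_biUnion hi (le_antisymm hpq hqp ▸ hq)

theorem finite_minimalPrimes_prod {ι : Type*} [Fintype ι] (J : ι → Ideal R)
    (hJ : ∀ i, (J i).minimalPrimes.Finite) : (∏ i, J i).minimalPrimes.Finite :=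
  (Set.finite_iUnion hJ).subset <| by
    simpa only [Finset.mem_univ, Set.iUnion_true] using minimalPrimes_prod_subset Finset.univ J

end Ideal

namespace IsNOAIdeal

variable {R : Type*} [CommRing R] {n : ℕ} {J : Ideal R}

theorem mem_radical_or_mem_of_mul_mem (hn : 0 < n) (hJ : IsNOAIdeal n J) {a b : R}
    (hab : a * b ∈ J) : a ∈ J.radical ∨ b ∈ J := by
  by_cases ha : IsUnit a
  · exact Or.inr ((J.unit_mul_mem_iff_mem ha).mp hab)
  by_cases hb : IsUnit b
  · exact Or.inl (J.le_radical ((J.mul_unit_mem_iff_mem hb).mp hab))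
  set f : Fin (n + 1) → R := Fin.snoc (fun _ => a) b
  have hf : ∀ i, ¬IsUnit (f i) :=
    Fin.lastCases (by simpa [f] using hb) fun _ => by simpa [f] using ha
  have hprod : ∏ i, f i = a ^ (n - 1) * (a * b) := by
    rw [Fin.prod_univ_castSucc, ← mul_assoc, ← pow_succ, Nat.sub_add_cancel hn]
    simp [f]
  rcases hJ.2 f hf (hprod ▸ J.mul_mem_left _ hab) with h | h
  · exact Or.inl ⟨n, by simpa [f] using h⟩
  · exact Or.inr (by simpa [f] using h)

theorem isPrime_radical_s3 (hn : 0 < n) (hJ : IsNOAIdeal n J) : J.radical.IsPrime where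
  ne_top' := by rw [Ne, Ideal.radical_eq_top]; exact hJ.1
  mem_or_mem' := by
    rintro a b ⟨k, hk⟩
    rw [mul_pow] at hk
    exact (hJ.mem_radical_or_mem_of_mul_mem hn hk).imp Ideal.mem_radical_of_pow_mem
      fun h => ⟨k, h⟩

theorem minimalPrimes_eq_singleton_radical (hn : 0 < n) (hJ : IsNOAIdeal n J) :
    J.minimalPrimes = {J.radical} := by
  have := hJ.isPrime_radical_s3 hn
  rw [← Ideal.radical_minimalPrimes, Ideal.minimalPrimes_eq_subsingleton_self]

end IsNOAIdeal

theorem stmt3_general {R : Type*} [CommRing R] (n : ℕ) (hn : 0 < n)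
    (I : Ideal R) (h : HasNOAFactorization n I) :
    I.minimalPrimes.Finite := by
  obtain ⟨m, J, -, hJ, rfl⟩ := h
  exact Ideal.finite_minimalPrimes_prod J fun i => by
    rw [(hJ i).minimalPrimes_eq_singleton_radical hn]
    exact Set.finite_singleton _

theorem stmt3 {R : Type*} [CommRing R] [Nontrivial R] (n : ℕ) (hn : 0 < n)
    (I : Ideal R) (hI : I ≠ ⊤) (h : HasNOAFactorization n I) :
    I.minimalPrimes.Finite :=
  stmt3_general n hn I h
end

section
/- Let R be a local commutative ring such that every proper principal ideal of R has an n-OA-factorization. Then every nonmaximal minimal prime ideal of R is a principal ideal. -/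
/-!
A prime `P` that is minimal and not maximal avoids some nonunit `y`, hence also `y ^ n`. An
`n`-OA ideal missing `y ^ n` is prime (apply the absorbing property to `y ^ (n-1) · a · b` and
then to `y ^ n · a`), so in an `n`-OA-factorization of `(x)`, `x ∈ P`, some factor lies in `P`,
is prime, and by minimality equals `P`: every `(x) ⊆ P` is `P * K`. If some `K` is the whole ring, `P = (x)`. Otherwise every `K` lies in the maximal ideal
`𝔪`, so `P = P𝔪` and `(x) = P K = 𝔪 (x)`, whence `x = 0` by Nakayama and `P = 0`.
-/

namespace IsNOAIdeal

variable {R : Type*} [CommRing R] {n : ℕ} {J : Ideal R}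

theorem prod_mul_mem {f : Fin n → R} {x : R} (hJ : IsNOAIdeal n J) (hf : ∀ i, ¬IsUnit (f i))
    (hx : ¬IsUnit x) (hmem : (∏ i, f i) * x ∈ J) : (∏ i, f i) ∈ J ∨ x ∈ J := by
  have hsnoc : ∀ i, ¬IsUnit ((Fin.snoc f x : Fin (n + 1) → R) i) :=
    Fin.lastCases (by simpa using hx) (fun j => by simpa using hf j)
  simpa using hJ.2 (Fin.snoc f x) hsnoc (by simpa [Fin.prod_snoc] using hmem)

theorem pow_mul_mem {y x : R} (hJ : IsNOAIdeal n J) (hy : ¬IsUnit y) (hx : ¬IsUnit x)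
    (hmem : y ^ n * x ∈ J) : y ^ n ∈ J ∨ x ∈ J := by
  simpa using hJ.prod_mul_mem (f := fun _ => y) (fun _ => hy) hx (by simpa using hmem)

theorem pow_mul_mul_mem {k : ℕ} {y a b : R} (hJ : IsNOAIdeal (k + 1) J) (hy : ¬IsUnit y)
    (ha : ¬IsUnit a) (hb : ¬IsUnit b) (hmem : y ^ k * a * b ∈ J) : y ^ k * a ∈ J ∨ b ∈ J := by
  have hsnoc : ∀ i, ¬IsUnit ((Fin.snoc (fun _ => y) a : Fin (k + 1) → R) i) :=
    Fin.lastCases (by simpa using ha) (fun j => by simpa using hy)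
  simpa [Fin.prod_snoc] using hJ.prod_mul_mem hsnoc hb (by simpa [Fin.prod_snoc] using hmem)

theorem isPrime_of_pow_notMem {y : R} (hJ : IsNOAIdeal n J) (hn : n ≠ 0) (hy : ¬IsUnit y)
    (hyn : y ^ n ∉ J) : J.IsPrime := by
  obtain ⟨k, rfl⟩ := Nat.exists_eq_succ_of_ne_zero hn
  refine ⟨hJ.1, fun {a b} hab => ?_⟩
  by_cases ha : IsUnit a
  · exact .inr ((J.unit_mul_mem_iff_mem ha).1 hab)
  by_cases hb : IsUnit b
  · exact .inl ((J.mul_unit_mem_iff_mem hb).1 hab)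
  by_contra! hcon
  have hya : y ^ k * a ∈ J :=
    (hJ.pow_mul_mul_mem hy ha hb (by rw [mul_assoc]; exact J.mul_mem_left _ hab)).resolve_right
      hcon.2
  have hyna : y ^ (k + 1) * a ∈ J := by rw [pow_succ', mul_assoc]; exact J.mul_mem_left y hya
  exact (hJ.pow_mul_mem hy ha hyna).elim hyn hcon.1

end IsNOAIdeal

theorem HasNOAFactorization.exists_eq_mul_of_le_minimalPrimes {R : Type*} [CommRing R] {n : ℕ}
    (hn : n ≠ 0) {I P : Ideal R} (hP : P ∈ minimalPrimes R) {y : R} (hy : ¬IsUnit y)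
    (hyP : y ∉ P) (hI : HasNOAFactorization n I) (hIP : I ≤ P) : ∃ K, I = P * K := by
  obtain ⟨m, J, -, hJ, rfl⟩ := hI
  obtain ⟨i, -, hiP⟩ := hP.1.1.prod_le.1 hIP
  have hyn : y ^ n ∉ J i := fun h => hyP (hP.1.1.mem_of_pow_mem n (hiP h))
  have hPi : P = J i := le_antisymm (hP.2 ⟨(hJ i).isPrime_of_pow_notMem hn hy hyn, bot_le⟩ hiP) hiP
  exact ⟨∏ j ∈ Finset.univ.erase i, J j, by rw [← Finset.mul_prod_erase _ _ (Finset.mem_univ i), hPi]⟩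

theorem IsLocalRing.isPrincipal_of_forall_span_singleton_eq_mul {R : Type*} [CommRing R]
    [IsLocalRing R] {P : Ideal R} (hP : ∀ x ∈ P, ∃ K, Ideal.span {x} = P * K) :
    Submodule.IsPrincipal P := by
  by_contra hnp
  have hK : ∀ x ∈ P, ∃ K ≤ maximalIdeal R, Ideal.span {x} = P * K := by
    intro x hx
    obtain ⟨K, hK⟩ := hP x hx
    refine ⟨K, le_maximalIdeal fun hKt => hnp ⟨x, ?_⟩, hK⟩
    rw [hKt, Ideal.mul_top] at hK
    exact hK.symm
  have hPm : P ≤ P * maximalIdeal R := fun x hx => by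
    obtain ⟨K, hKm, hK⟩ := hK x hx
    exact (hK ▸ Ideal.mul_mono_right hKm) (Ideal.mem_span_singleton_self x)
  have hbot : P = ⊥ := by
    refine eq_bot_iff.2 fun x hx => ?_
    obtain ⟨K, hK⟩ := hP x hx
    have hle : Ideal.span {x} ≤ maximalIdeal R • Ideal.span {x} :=
      calc Ideal.span {x} = P * K := hK
        _ ≤ P * maximalIdeal R * K := Ideal.mul_mono_left hPm
        _ = maximalIdeal R • Ideal.span {x} := by rw [Ideal.smul_eq_mul, hK]; ring
    have := Submodule.eq_bot_of_le_smul_of_le_jacobson_bot _ _ (Submodule.fg_span_singleton x)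
      hle (maximalIdeal_le_jacobson ⊥)
    simpa using this
  exact hnp (hbot ▸ bot_isPrincipal)

theorem stmt4 {R : Type*} [CommRing R] [IsLocalRing R] (n : ℕ) (hn : 0 < n)
    (h : ∀ x : R, Ideal.span {x} ≠ ⊤ → HasNOAFactorization n (Ideal.span {x}))
    (P : Ideal R) (hP : P ∈ minimalPrimes R) (hPm : P ≠ IsLocalRing.maximalIdeal R) :
    Submodule.IsPrincipal P := by
  have hPle : P ≤ IsLocalRing.maximalIdeal R := IsLocalRing.le_maximalIdeal hP.1.1.ne_top
  obtain ⟨y, hyM, hyP⟩ := SetLike.exists_of_lt (lt_of_le_of_ne hPle hPm)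
  refine IsLocalRing.isPrincipal_of_forall_span_singleton_eq_mul fun x hx => ?_
  have hxP : Ideal.span {x} ≤ P := (Ideal.span_singleton_le_iff_mem P).2 hx
  exact (h x (ne_top_of_le_ne_top hP.1.1.ne_top hxP)).exists_eq_mul_of_le_minimalPrimes
    hn.ne' hP hyM hyP hxP
end

section
/- Let R be a local commutative ring with maximal ideal M such that every proper principal ideal of R has an n-OA-factorization and the Krull dimension of R equals 1. Then R is an integral domain. -/
/-!
An `n`-OA ideal of a local ring `(R, 𝔪)` is either prime or contains `𝔪 ^ n`. In dimension one
every prime other than `𝔪` is minimal, so an element `x` outside all minimal primes has a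
factorization whose `m` factors all contain `𝔪 ^ n`, whence `𝔪 ^ (n * m) ≤ (x) ≤ 𝔪 ^ m`.
Factoring `0` shows that there are finitely many minimal primes, and prime avoidance yields
`s ∈ 𝔪` outside all of them. For a minimal prime `p < 𝔪` and `w ∈ p`, an exponent `t` so large
that `w + s ^ t` avoids the minimal primes forces `w ∈ (s)`; hence `p = s p`. Each `v ∈ p`
generates an ideal having `p` as a factor, so `(v) = s (v)` and Nakayama gives `v = 0`.
-/

open Ideal IsLocalRing

theorem Ideal.pow_le_of_forall_prod_mem {R : Type*} [CommRing R] {I J : Ideal R} {k : ℕ}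
    (h : ∀ g : Fin k → R, (∀ i, g i ∈ I) → ∏ i, g i ∈ J) : I ^ k ≤ J := by
  rw [Submodule.pow_eq_span_pow_set, Submodule.span_le]
  intro x hx
  obtain ⟨g, rfl⟩ := Set.mem_pow.mp hx
  rw [List.prod_ofFn]
  exact h (fun i => g i) fun i => (g i).2

theorem Ideal.IsPrime.span_singleton_mul_eq_of_le {R : Type*} [CommRing R] {p : Ideal R}
    (hp : p.IsPrime) {s : R} (hsp : s ∉ p) (hps : p ≤ span {s}) : span {s} * p = p := by
  refine le_antisymm mul_le_right fun v hv => ?_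
  obtain ⟨c, rfl⟩ := mem_span_singleton'.mp (hps hv)
  rw [mul_comm c s]
  exact mul_mem_mul (mem_span_singleton_self s) ((hp.mem_or_mem hv).resolve_right hsp)

theorem Ideal.exists_mem_forall_notMem_of_finite {R : Type*} [CommRing R] {M : Ideal R}
    [M.IsMaximal] {S : Set (Ideal R)} (hS : S.Finite) (hprime : ∀ q ∈ S, q.IsPrime)
    (hMS : M ∉ S) : ∃ s ∈ M, ∀ q ∈ S, s ∉ q := by
  by_contra! hcover
  obtain ⟨q, hq, hMq⟩ := (subset_union_prime_finite hS (f := id) ⊥ ⊥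
    fun q hq _ _ => hprime q hq).mp fun s hs => by simpa using hcover s hs
  exact hMS (IsMaximal.eq_of_le ‹_› (hprime q hq).ne_top hMq ▸ hq)

section IsLocalRing

variable {R : Type*} [CommRing R] [IsLocalRing R] {n : ℕ}

theorem IsNOAIdeal.prod_mem_or_mem_s6 {J : Ideal R} (hJ : IsNOAIdeal n J) {g : Fin n → R}
    (hg : ∀ i, g i ∈ maximalIdeal R) {b : R} (hb : b ∈ maximalIdeal R)
    (hgb : (∏ i, g i) * b ∈ J) : ∏ i, g i ∈ J ∨ b ∈ J := by
  have hnu : ∀ i, ¬IsUnit ((Fin.snoc g b : Fin (n + 1) → R) i) :=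
    Fin.lastCases (by simpa using hb) fun i => by simpa using hg i
  simpa using hJ.2 (Fin.snoc g b) hnu (by simpa [Fin.prod_snoc] using hgb)

theorem IsNOAIdeal.mul_mem_of_mem_pow {k : ℕ} {J : Ideal R} (hJ : IsNOAIdeal (k + 1) J)
    {u v : R} (hu : u ∈ maximalIdeal R) (hv : v ∈ maximalIdeal R) (huv : u * v ∈ J)
    (hvJ : v ∉ J) {c : R} (hc : c ∈ maximalIdeal R ^ k) : c * u ∈ J := by
  suffices maximalIdeal R ^ k ≤ J.colon (span {u}) from mem_colon_span_singleton.mp (this hc)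
  refine pow_le_of_forall_prod_mem fun g hg => mem_colon_span_singleton.mpr ?_
  have := hJ.prod_mem_or_mem_s6 (g := Fin.snoc g u) (Fin.lastCases (by simpa) (by simpa)) hv
    (by simpa [Fin.prod_snoc, mul_assoc] using J.mul_mem_left (∏ i, g i) huv)
  simpa [Fin.prod_snoc, hvJ] using this

theorem IsNOAIdeal.pow_le_of_mul_mem {k : ℕ} {J : Ideal R} (hJ : IsNOAIdeal (k + 2) J)
    {a b : R} (ha : a ∈ maximalIdeal R) (hb : b ∈ maximalIdeal R) (hab : a * b ∈ J)
    (haJ : a ∉ J) (hbJ : b ∉ J) : maximalIdeal R ^ (k + 2) ≤ J := by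
  have hMa : ∀ c ∈ maximalIdeal R ^ (k + 1), c * a ∈ J := fun c hc =>
    hJ.mul_mem_of_mem_pow ha hb hab hbJ hc
  have hMb : ∀ c ∈ maximalIdeal R ^ (k + 1), c * b ∈ J := fun c hc =>
    hJ.mul_mem_of_mem_pow hb ha (by rwa [mul_comm]) haJ hc
  refine pow_le_of_forall_prod_mem fun g hg => ?_
  set P := ∏ i : Fin k, g i.succ.succ
  have hMP : ∀ x ∈ maximalIdeal R, x * P ∈ maximalIdeal R ^ (k + 1) := fun x hx => by
    rw [pow_succ']
    refine mul_mem_mul hx ?_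
    simpa using prod_mem_prod (s := Finset.univ) fun (i : Fin k) _ => hg i.succ.succ
  -- Perturbing two factors by `a` and `b` makes the product absorb `a`.
  have hperturbed : (g 0 + a) * ((g 1 + b) * P) ∈ J := by
    let g' : Fin (k + 2) → R :=
      Fin.cons (g 0 + a) (Fin.cons (g 1 + b) fun i : Fin k => g i.succ.succ)
    have hg' : ∏ i, g' i = (g 0 + a) * ((g 1 + b) * P) := by simp [g', Fin.prod_univ_succ, P]
    have hexpand : (g 0 + a) * ((g 1 + b) * P) * a = g 0 * g 1 * P * a + a * b * (g 0 * P)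
        + a * g 1 * P * a + a * b * (P * a) := by ring
    have hmem : (g 0 + a) * ((g 1 + b) * P) * a ∈ J := by
      rw [hexpand]
      exact add_mem (add_mem (add_mem (hMa _ (hMP _ (mul_mem_right _ _ (hg 0))))
        (J.mul_mem_right _ hab)) (hMa _ (hMP _ (mul_mem_left _ _ (hg 1)))))
        (J.mul_mem_right _ hab)
    rw [← hg'] at hmem ⊢
    refine (hJ.prod_mem_or_mem_s6 ?_ ha hmem).resolve_right haJ
    exact Fin.cases (add_mem (hg 0) ha) (Fin.cases (add_mem (hg 1) hb) fun i => hg _)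
  have : ∏ i, g i = (g 0 + a) * ((g 1 + b) * P) - (g 0 * P * b + g 1 * P * a + a * b * P) := by
    simp only [Fin.prod_univ_succ, Fin.succ_zero_eq_one, P]
    ring
  rw [this]
  exact sub_mem hperturbed (add_mem (add_mem (hMb _ (hMP _ (hg 0))) (hMa _ (hMP _ (hg 1))))
    (J.mul_mem_right _ hab))

theorem IsNOAIdeal.isPrime_or_pow_le (hn : 0 < n) {J : Ideal R} (hJ : IsNOAIdeal n J) :
    J.IsPrime ∨ maximalIdeal R ^ n ≤ J := by
  refine or_iff_not_imp_left.mpr fun hJp => ?_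
  obtain ⟨a, b, hab, haJ, hbJ⟩ : ∃ a b, a * b ∈ J ∧ a ∉ J ∧ b ∉ J := by
    simpa [isPrime_iff, hJ.1] using hJp
  have ha : a ∈ maximalIdeal R := by
    by_contra hu
    exact hbJ ((J.unit_mul_mem_iff_mem (notMem_maximalIdeal.mp hu)).mp hab)
  have hb : b ∈ maximalIdeal R := by
    by_contra hu
    exact haJ ((J.mul_unit_mem_iff_mem (notMem_maximalIdeal.mp hu)).mp hab)
  obtain _ | _ | k := n
  · exact absurd hn (lt_irrefl 0)
  · exact absurd (by simpa using hJ.mul_mem_of_mem_pow ha hb hab hbJ (c := 1) (by simp)) haJ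
  · exact hJ.pow_le_of_mul_mem ha hb hab haJ hbJ

theorem exists_eq_of_mem_minimalPrimes_prod (hn : 0 < n) {m : ℕ} {K : Fin m → Ideal R}
    (hK : ∀ i, IsNOAIdeal n (K i)) {q : Ideal R} (hq : q ∈ (∏ i, K i).minimalPrimes)
    (hqM : q ≠ maximalIdeal R) : ∃ i, K i = q := by
  obtain ⟨i, -, hiq⟩ := hq.1.1.prod_le.mp hq.1.2
  refine ⟨i, ?_⟩
  rcases (hK i).isPrime_or_pow_le hn with hprime | hpow
  · exact le_antisymm hiq
      (hq.2 ⟨hprime, prod_le_inf.trans (Finset.inf_le (Finset.mem_univ i))⟩ hiq)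
  · exact absurd ((maximalIdeal.isMaximal R).eq_of_le hq.1.1.ne_top
      (hq.1.1.le_of_pow_le (hpow.trans hiq))).symm hqM

theorem HasNOAFactorization.exists_pow_le_le (hn : 0 < n) {I : Ideal R}
    (hI : HasNOAFactorization n I)
    (hIq : ∀ q : Ideal R, q.IsPrime → I ≤ q → q = maximalIdeal R) :
    ∃ m, maximalIdeal R ^ (n * m) ≤ I ∧ I ≤ maximalIdeal R ^ m := by
  obtain ⟨m, K, -, hK, rfl⟩ := hI
  refine ⟨m, ?_⟩
  have hfactor : ∀ i, maximalIdeal R ^ n ≤ K i := fun i => by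
    rcases (hK i).isPrime_or_pow_le hn with hprime | hpow
    · rw [hIq _ hprime (prod_le_inf.trans (Finset.inf_le (Finset.mem_univ i)))]
      exact pow_le_self hn.ne'
    · exact hpow
  constructor
  · simpa [pow_mul] using Finset.pow_card_le_prod Finset.univ K _ fun i _ => hfactor i
  · simpa using Finset.prod_le_pow_card Finset.univ K _ fun i _ => le_maximalIdeal (hK i).1

theorem setOf_add_pow_mem_subsingleton {q : Ideal R} (hq : q.IsPrime) {s : R}
    (hs : s ∈ maximalIdeal R) (hsq : s ∉ q) (w : R) : {t : ℕ | w + s ^ t ∈ q}.Subsingleton := by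
  suffices ∀ t d, w + s ^ t ∈ q → w + s ^ (t + d + 1) ∉ q by
    intro t ht t' ht'
    by_contra hne
    rcases Nat.lt_or_gt_of_ne hne with hlt | hlt
    · obtain ⟨d, rfl⟩ := Nat.exists_eq_add_of_lt hlt
      exact this t d ht ht'
    · obtain ⟨d, rfl⟩ := Nat.exists_eq_add_of_lt hlt
      exact this t' d ht' ht
  intro t d ht ht'
  have hunit : IsUnit (1 - s ^ (d + 1)) :=
    isUnit_one_sub_self_of_mem_nonunits _ (pow_mem_of_mem _ hs _ d.succ_pos)
  have : s ^ t * (1 - s ^ (d + 1)) ∈ q := by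
    convert q.sub_mem ht ht' using 1
    ring
  exact hsq (hq.mem_of_pow_mem t ((q.mul_unit_mem_iff_mem hunit).mp this))

theorem exists_lt_forall_add_pow_notMem {S : Set (Ideal R)} (hS : S.Finite)
    (hprime : ∀ q ∈ S, q.IsPrime) {s : R} (hs : s ∈ maximalIdeal R) (hsS : ∀ q ∈ S, s ∉ q)
    (w : R) (T : ℕ) : ∃ t, T < t ∧ ∀ q ∈ S, w + s ^ t ∉ q := by
  have hbad : (⋃ q ∈ S, {t : ℕ | w + s ^ t ∈ q}).Finite :=
    hS.biUnion fun q hq => (setOf_add_pow_mem_subsingleton (hprime q hq) hs (hsS q hq) w).finite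
  obtain ⟨t, ht, hTt⟩ := hbad.infinite_compl.exists_gt T
  exact ⟨t, hTt, fun q hq htq => ht (Set.mem_biUnion hq htq)⟩

theorem le_of_pow_mem_span_add_pow {p : Ideal R} (hp : p.IsPrime) {s w : R}
    (hs : s ∈ maximalIdeal R) (hsp : s ∉ p) (hw : w ∈ p) {L t : ℕ}
    (hL : s ^ L ∈ span {w + s ^ t}) : t ≤ L := by
  by_contra! hlt
  obtain ⟨d, rfl⟩ := Nat.exists_eq_add_of_lt hlt
  obtain ⟨ρ, hρ⟩ := mem_span_singleton'.mp hL
  have hunit : IsUnit (1 - ρ * s ^ (d + 1)) :=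
    isUnit_one_sub_self_of_mem_nonunits _ (mul_mem_left _ ρ (pow_mem_of_mem _ hs _ d.succ_pos))
  have : s ^ L * (1 - ρ * s ^ (d + 1)) ∈ p := by
    convert p.mul_mem_left ρ hw using 1
    linear_combination -hρ
  exact hsp (hp.mem_of_pow_mem L ((p.mul_unit_mem_iff_mem hunit).mp this))

theorem le_span_singleton_of_mem_minimalPrimes [Ring.KrullDimLE 1 R] (hn : 0 < n)
    (h : ∀ x : R, span {x} ≠ ⊤ → HasNOAFactorization n (span {x}))
    (hfin : (minimalPrimes R).Finite) {s : R} (hs : s ∈ maximalIdeal R)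
    (hsmin : ∀ q ∈ minimalPrimes R, s ∉ q) {p : Ideal R} (hp : p ∈ minimalPrimes R) :
    p ≤ span {s} := by
  have hsandwich : ∀ x ∈ maximalIdeal R, (∀ q ∈ minimalPrimes R, x ∉ q) →
      ∃ m, maximalIdeal R ^ (n * m) ≤ span {x} ∧ span {x} ≤ maximalIdeal R ^ m :=
    fun x hx hxmin => (h x (span_singleton_ne_top hx)).exists_pow_le_le hn fun q hq hxq =>
      eq_maximalIdeal (((Ring.krullDimLE_one_iff.mp ‹_› q hq).resolve_left fun hqmin =>
        hxmin q hqmin (hxq (mem_span_singleton_self x))))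
  obtain ⟨N, hN, -⟩ := hsandwich s hs hsmin
  intro w hw
  -- `t > n²N` forces the factorization of `w + s ^ t` to have at least `nN` factors.
  obtain ⟨t, hNt, ht⟩ :=
    exists_lt_forall_add_pow_notMem hfin (fun q hq => hq.1.1) hs hsmin w (n * (n * N))
  have hx : w + s ^ t ∈ maximalIdeal R :=
    add_mem (le_maximalIdeal hp.1.1.ne_top hw) (pow_mem_of_mem _ hs t (by omega))
  obtain ⟨m, hlow, hup⟩ := hsandwich _ hx ht
  have htm : t ≤ n * m :=
    le_of_pow_mem_span_add_pow hp.1.1 hs (hsmin p hp) hw (hlow (pow_mem_pow hs _))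
  have hNm : n * N ≤ m := (Nat.lt_of_mul_lt_mul_left (hNt.trans_le htm)).le
  have hxs : w + s ^ t ∈ span {s} := hN (pow_le_pow_right hNm (hup (mem_span_singleton_self _)))
  have hst : s ^ t ∈ span {s} := mem_span_singleton.mpr (dvd_pow_self s (by omega))
  simpa using sub_mem hxs hst

theorem eq_bot_of_le_span_singleton (hn : 0 < n)
    (h : ∀ x : R, span {x} ≠ ⊤ → HasNOAFactorization n (span {x})) {p : Ideal R}
    (hp : p ∈ minimalPrimes R) (hpM : p ≠ maximalIdeal R) {s : R} (hs : s ∈ maximalIdeal R)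
    (hsp : s ∉ p) (hps : p ≤ span {s}) : p = ⊥ := by
  refine eq_bot_iff.mpr fun v hv => mem_bot.mpr ?_
  obtain ⟨m, K, -, hK, hvK⟩ := h v (span_singleton_ne_top (le_maximalIdeal hp.1.1.ne_top hv))
  have hpv : p ∈ (∏ i, K i).minimalPrimes := by
    rw [← hvK]
    exact ⟨⟨hp.1.1, span_le.mpr (Set.singleton_subset_iff.mpr hv)⟩,
      fun q hq hqp => hp.2 ⟨hq.1, bot_le⟩ hqp⟩
  obtain ⟨i, hi⟩ := exists_eq_of_mem_minimalPrimes_prod hn hK hpv hpM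
  have hv_smul : span {v} ≤ span {s} • span {v} := by
    rw [hvK, ← Finset.mul_prod_erase Finset.univ K (Finset.mem_univ i), hi, smul_eq_mul,
      ← mul_assoc, hp.1.1.span_singleton_mul_eq_of_le hsp hps]
  have := Submodule.eq_bot_of_le_smul_of_le_jacobson_bot _ _ (Submodule.fg_span_singleton v)
    hv_smul (by rw [jacobson_eq_maximalIdeal ⊥ bot_ne_top]; exact span_le.mpr (by simpa using hs))
  simpa using this

end IsLocalRing

theorem stmt6 {R : Type*} [CommRing R] [IsLocalRing R] (n : ℕ) (hn : 0 < n)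
    (h : ∀ x : R, Ideal.span {x} ≠ ⊤ → HasNOAFactorization n (Ideal.span {x}))
    (hdim : ringKrullDim R = 1) : IsDomain R := by
  have : Ring.KrullDimLE 1 R := Ring.krullDimLE_iff.mpr hdim.le
  obtain ⟨p, hp, hpmax⟩ : ∃ p ∈ minimalPrimes R, ¬p.IsMaximal := by
    have : ¬Ring.KrullDimLE 0 R := by simp [Ring.krullDimLE_iff, hdim]
    simpa [Ring.krullDimLE_zero_iff_forall_minimalPrimes_isMaximal] using this
  have hpM : p ≠ maximalIdeal R := fun hpM => hpmax (hpM ▸ maximalIdeal.isMaximal R)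
  have hpleM : p ≤ maximalIdeal R := le_maximalIdeal hp.1.1.ne_top
  have hMmin : maximalIdeal R ∉ minimalPrimes R := fun hM =>
    hpM (le_antisymm hpleM (hM.2 ⟨hp.1.1, bot_le⟩ hpleM))
  obtain ⟨m, K, -, hK, hK0⟩ := h 0 (by simp)
  have hfin : (minimalPrimes R).Finite := (Set.finite_range K).subset fun q hq =>
    exists_eq_of_mem_minimalPrimes_prod hn hK (by rwa [← hK0, span_singleton_eq_bot.mpr rfl])
      fun hqM => hMmin (hqM ▸ hq)
  obtain ⟨s, hs, hsmin⟩ := exists_mem_forall_notMem_of_finite hfin (fun q hq => hq.1.1) hMmin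
  have hpbot : p = ⊥ := eq_bot_of_le_span_singleton hn h hp hpM hs (hsmin p hp)
    (le_span_singleton_of_mem_minimalPrimes hn h hfin hs hsmin hp)
  have : (⊥ : Ideal R).IsPrime := hpbot ▸ hp.1.1
  exact IsDomain.of_bot_isPrime R
end

section
/- Let R be a reduced local commutative ring with Krull dimension at least 2 such that every proper principal ideal of R has an n-OA-factorization. Then R is a unique factorization domain. -/
/-!
In a local ring a non-prime `n`-OA ideal contains the `n`-th power of every nonunit, so an `n`-OA
ideal lying in a prime other than the maximal ideal `𝔪` is itself prime. In a local ring every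
factor of a principal ideal `(x)` with `x` regular is principal.

Since `dim R ≥ 2` there is a prime `q` that is neither minimal nor maximal. Each minimal prime
contains, hence equals, a factor of `(0)`, so there are finitely many of them, and prime
avoidance gives a regular `y ∈ q`. A factor of `(y)` inside `q` is prime and principal, generated
by a regular prime element `p`. A minimal prime `M ⊆ (p)` satisfies `M = pM`; as `M` is a factor
of `(a)` for every `a ∈ M`, we get `(a) = p(a)`, so `a = 0` by Nakayama and `R` is a domain.
Finally every nonzero prime `P ≠ 𝔪` contains a prime element by the same factor argument and
`p ∈ 𝔪`, so `R` is a UFD by Kaplansky's criterion.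
-/

open Ideal IsLocalRing
open scoped nonZeroDivisors

section

variable {R : Type*} [CommRing R]

namespace IsNOAIdeal

variable {n : ℕ} {I : Ideal R}

lemma pow_mul_mem_or_mem {k : ℕ} (hI : IsNOAIdeal (k + 1) I) {z y₁ y₂ : R} (hz : ¬IsUnit z)
    (hy₁ : ¬IsUnit y₁) (hy₂ : ¬IsUnit y₂) (h : z ^ k * y₁ * y₂ ∈ I) :
    z ^ k * y₁ ∈ I ∨ y₂ ∈ I := by
  have := hI.2 (Fin.snoc (Fin.snoc (fun _ : Fin k => z) y₁) y₂) ?_ ?_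
  · simpa [Fin.prod_univ_castSucc] using this
  · intro i
    refine Fin.lastCases (by simpa) (fun j => Fin.lastCases (by simpa) (fun _ => by simpa) j) i
  · simpa [Fin.prod_univ_castSucc] using h

lemma pow_mem_of_not_isPrime [IsLocalRing R] (hn : 0 < n) (hI : IsNOAIdeal n I)
    (hI' : ¬I.IsPrime) {z : R} (hz : ¬IsUnit z) : z ^ n ∈ I := by
  obtain ⟨k, rfl⟩ := Nat.exists_eq_add_one.mpr hn
  obtain ⟨b, c, hbc, hb, hc⟩ : ∃ b c, b * c ∈ I ∧ b ∉ I ∧ c ∉ I := by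
    simpa [Ideal.isPrime_iff, hI.1] using hI'
  have hbu : ¬IsUnit b := fun hu => hc ((I.unit_mul_mem_iff_mem hu).mp hbc)
  have hcu : ¬IsUnit c := fun hu => hb ((I.mul_unit_mem_iff_mem hu).mp hbc)
  have hzb : z ^ k * b ∈ I := by
    refine (hI.pow_mul_mem_or_mem hz hbu hcu ?_).resolve_right hc
    simpa only [mul_assoc] using I.mul_mem_left (z ^ k) hbc
  have hzc : z ^ k * c ∈ I := by
    refine (hI.pow_mul_mem_or_mem hz hcu hbu ?_).resolve_right hb
    simpa only [mul_assoc, mul_comm c] using I.mul_mem_left (z ^ k) hbc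
  -- `z + b` is a nonunit because `R` is local
  have hzzb : z ^ k * (z + b) ∈ I := by
    refine (hI.pow_mul_mem_or_mem hz (nonunits_add hz hbu) hcu ?_).resolve_right hc
    have : z ^ k * (z + b) * c = z * (z ^ k * c) + z ^ k * (b * c) := by ring
    exact this ▸ I.add_mem (I.mul_mem_left z hzc) (I.mul_mem_left _ hbc)
  have : z ^ (k + 1) = z ^ k * (z + b) - z ^ k * b := by ring
  exact this ▸ I.sub_mem hzzb hzb

lemma isPrime_of_le [IsLocalRing R] (hn : 0 < n) (hI : IsNOAIdeal n I) {P : Ideal R}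
    [hP : P.IsPrime] (hIP : I ≤ P) (hPm : P ≠ maximalIdeal R) : I.IsPrime := by
  by_contra hI'
  refine hPm (le_antisymm (le_maximalIdeal hP.ne_top) fun z hz => ?_)
  exact hP.mem_of_pow_mem n
    (hIP (hI.pow_mem_of_not_isPrime hn hI' ((mem_maximalIdeal z).mp hz)))

end IsNOAIdeal

namespace Ideal

lemma isPrincipal_of_mul_eq_span_singleton [IsLocalRing R] {x : R} (hx : x ∈ R⁰)
    {I K : Ideal R} (h : I * K = span {x}) : I.IsPrincipal := by
  have hx_notMem : x ∉ maximalIdeal R * span {x} := by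
    intro hmem
    obtain ⟨e, he, hex⟩ := mem_mul_span_singleton.mp hmem
    have he1 : 1 - e = 0 :=
      mem_nonZeroDivisors_iff_right.mp hx _ (by rw [sub_mul, one_mul, hex, sub_self])
    exact (mem_maximalIdeal e).mp he (sub_eq_zero.mp he1 ▸ isUnit_one)
  obtain ⟨a, ha, b, hb, hab⟩ : ∃ a ∈ I, ∃ b ∈ K, a * b ∉ maximalIdeal R * span {x} := by
    by_contra! hle
    exact hx_notMem (mul_le.mpr hle (h ▸ mem_span_singleton_self x))
  obtain ⟨t, ht⟩ := mem_span_singleton'.mp (h ▸ mul_mem_mul ha hb)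
  obtain ⟨u, rfl⟩ : IsUnit t := by
    by_contra htu
    exact hab (ht ▸ mul_mem_mul ((mem_maximalIdeal t).mpr htu) (mem_span_singleton_self x))
  have hxab : a * (b * ↑u⁻¹) = x := by
    rw [← mul_assoc, ← ht, mul_comm, ← mul_assoc]
    simp
  have hb' : b * ↑u⁻¹ ∈ R⁰ := (mul_mem_nonZeroDivisors.mp (hxab ▸ hx)).2
  refine ⟨a, le_antisymm (fun j hj => ?_) ((span_singleton_le_iff_mem I).mpr ha)⟩
  obtain ⟨s, hs⟩ := mem_span_singleton'.mp (h ▸ mul_mem_mul hj (K.mul_mem_right _ hb))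
  rw [← hxab, ← mul_assoc, mul_cancel_right_mem_nonZeroDivisors hb'] at hs
  exact mem_span_singleton'.mpr ⟨s, hs⟩

lemma isPrincipal_of_prod_eq_span_singleton [IsLocalRing R] {x : R} (hx : x ∈ R⁰) {ι : Type*}
    {s : Finset ι} {J : ι → Ideal R} (h : ∏ i ∈ s, J i = span {x}) {i : ι} (hi : i ∈ s) :
    (J i).IsPrincipal := by
  classical
  exact isPrincipal_of_mul_eq_span_singleton hx ((s.mul_prod_erase J hi).trans h)

lemma IsPrime.span_singleton_mul_eq {P : Ideal R} (hP : P.IsPrime) {p : R} (hpP : p ∉ P)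
    (hPp : P ≤ span {p}) : span {p} * P = P := by
  refine le_antisymm mul_le_right fun a ha => ?_
  obtain ⟨b, rfl⟩ := mem_span_singleton'.mp (hPp ha)
  exact mul_comm p b ▸
    mul_mem_mul (mem_span_singleton_self p) ((hP.mem_or_mem ha).resolve_right hpP)

end Ideal

lemma mem_nonZeroDivisors_of_forall_notMem_minimalPrimes [IsReduced R] {y : R}
    (hy : ∀ M ∈ minimalPrimes R, y ∉ M) : y ∈ R⁰ := by
  refine mem_nonZeroDivisors_iff_right.mpr fun w hw => by_contra fun hw0 => ?_
  have hrad : (⊥ : Ideal R).radical = ⊥ := nilradical_eq_zero R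
  have hy_union : y ∈ ⋃ M ∈ minimalPrimes R, (M : Set R) := by
    rw [minimalPrimes, iUnion_minimalPrimes, hrad]
    exact ⟨w, by simpa using hw0, by simpa [mul_comm] using hw⟩
  obtain ⟨M, hM, hyM⟩ : ∃ M ∈ minimalPrimes R, y ∈ M := by simpa using hy_union
  exact hy M hM hyM

lemma exists_mem_nonZeroDivisors_of_forall_not_le [IsReduced R]
    (hfin : (minimalPrimes R).Finite) {I : Ideal R} (hI : ∀ M ∈ minimalPrimes R, ¬I ≤ M) :
    ∃ y ∈ I, y ∈ R⁰ := by
  by_contra! hcon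
  have hsub : (I : Set R) ⊆ ⋃ M ∈ (hfin.toFinset : Set (Ideal R)), (M : Set R) := by
    intro y hy
    obtain ⟨M, hM, hyM⟩ : ∃ M ∈ minimalPrimes R, y ∈ M := by
      by_contra! h
      exact hcon y hy (mem_nonZeroDivisors_of_forall_notMem_minimalPrimes h)
    exact Set.mem_biUnion (by simpa using hM) hyM
  obtain ⟨M, hM, hIM⟩ := (subset_union_prime (f := id) ⊥ ⊥
    (fun M hM _ _ => (hfin.mem_toFinset.mp hM).1.1)).mp hsub
  exact hI M (hfin.mem_toFinset.mp hM) hIM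

lemma exists_isPrime_not_isMaximal_forall_not_le_minimalPrimes (hdim : 2 ≤ ringKrullDim R) :
    ∃ q : Ideal R, q.IsPrime ∧ ¬q.IsMaximal ∧ ∀ M ∈ minimalPrimes R, ¬q ≤ M := by
  obtain ⟨l, hl⟩ := (Order.le_krullDim_iff (n := 2)).mp hdim
  have h01 : (l ⟨0, by omega⟩).asIdeal < (l ⟨1, by omega⟩).asIdeal :=
    l.strictMono (by simp [Fin.lt_def])
  have h12 : (l ⟨1, by omega⟩).asIdeal < (l ⟨2, by omega⟩).asIdeal :=
    l.strictMono (by simp [Fin.lt_def])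
  refine ⟨_, (l _).isPrime, fun hmax => h12.ne (hmax.eq_of_le (l _).isPrime.ne_top h12.le),
    fun M hM hqM => ?_⟩
  have hM0 : M ≤ (l ⟨0, by omega⟩).asIdeal :=
    hM.2 ⟨(l _).isPrime, bot_le⟩ (h01.le.trans hqM)
  exact (h01.trans_le (hqM.trans hM0)).false

section LocalRing

variable [IsLocalRing R] {n : ℕ}

lemma minimalPrimes_finite_of_hasNOAFactorization_bot (hn : 0 < n)
    (h0 : HasNOAFactorization n (⊥ : Ideal R)) (hm : maximalIdeal R ∉ minimalPrimes R) :
    (minimalPrimes R).Finite := by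
  obtain ⟨k, J, -, hJ, hbot⟩ := h0
  refine (Set.finite_range J).subset fun M hM => ?_
  have hMprime := hM.1.1
  obtain ⟨i, -, hiM⟩ := hMprime.prod_le.mp (hbot ▸ bot_le)
  have hJi : (J i).IsPrime := (hJ i).isPrime_of_le hn hiM fun h => hm (h ▸ hM)
  exact ⟨i, le_antisymm hiM (hM.2 ⟨hJi, bot_le⟩ hiM)⟩

lemma exists_prime_mem_of_hasNOAFactorization (hn : 0 < n) {P : Ideal R} [hP : P.IsPrime]
    (hPm : P ≠ maximalIdeal R) {y : R} (hyP : y ∈ P) (hy : y ∈ R⁰)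
    (hfac : HasNOAFactorization n (span {y})) : ∃ p ∈ P, Prime p ∧ p ∈ R⁰ := by
  obtain ⟨k, J, -, hJ, hyJ⟩ := hfac
  obtain ⟨i, -, hiP⟩ := hP.prod_le.mp (hyJ ▸ (span_singleton_le_iff_mem P).mpr hyP)
  obtain ⟨p, hp⟩ := (isPrincipal_of_prod_eq_span_singleton hy hyJ.symm (Finset.mem_univ i)).1
  rw [submodule_span_eq] at hp
  have hpy : p ∣ y := by
    rw [← mem_span_singleton, ← hp]
    exact prod_le_inf.trans (Finset.inf_le (Finset.mem_univ i)) (hyJ ▸ mem_span_singleton_self y)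
  have hpreg : p ∈ R⁰ := by
    obtain ⟨c, rfl⟩ := hpy
    exact (mul_mem_nonZeroDivisors.mp hy).1
  have hJi : (span {p}).IsPrime := hp ▸ (hJ i).isPrime_of_le hn hiP hPm
  exact ⟨p, hiP (hp ▸ mem_span_singleton_self p),
    (span_singleton_prime (nonZeroDivisors.ne_zero hpreg)).mp hJi, hpreg⟩

lemma isDomain_of_prime_mem_nonZeroDivisors (hn : 0 < n)
    (h : ∀ x : R, span {x} ≠ ⊤ → HasNOAFactorization n (span {x}))
    {P : Ideal R} [P.IsPrime] (hPm : P ≠ maximalIdeal R) {p : R} (hpP : p ∈ P) (hp : Prime p)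
    (hpreg : p ∈ R⁰) : IsDomain R := by
  have hp' := (span_singleton_prime hp.ne_zero).mpr hp
  obtain ⟨M, hM, hMp⟩ := exists_minimalPrimes_le (bot_le : ⊥ ≤ span {p})
  have hMprime := hM.1.1
  have hpM : span {p} * M = M := hMprime.span_singleton_mul_eq
    (fun hpM => notMem_nonZeroDivisors_of_mem_mem_minimalPrimes hpM hM hpreg) hMp
  have hMP : M ≤ P := hMp.trans ((span_singleton_le_iff_mem P).mpr hpP)
  suffices hM0 : M = ⊥ by
    have : (⊥ : Ideal R).IsPrime := hM0 ▸ hMprime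
    exact IsDomain.of_bot_isPrime R
  refine eq_bot_iff.mpr fun a ha => ?_
  have haM : span {a} ≤ M := (span_singleton_le_iff_mem M).mpr ha
  obtain ⟨k, J, -, hJ, haJ⟩ := h a (ne_top_of_le_ne_top hMprime.ne_top haM)
  obtain ⟨i, -, hiM⟩ := hMprime.prod_le.mp (haJ ▸ haM)
  have hJi : J i = M :=
    le_antisymm hiM (hM.2 ⟨(hJ i).isPrime_of_le hn (hiM.trans hMP) hPm, bot_le⟩ hiM)
  have hpa : span {p} * span {a} = span {a} := by
    classical
    rw [haJ, ← Finset.univ.mul_prod_erase J (Finset.mem_univ i), hJi, ← mul_assoc, hpM]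
  have := Submodule.eq_bot_of_le_smul_of_le_jacobson_bot (span {p}) (span {a})
    (Submodule.fg_span_singleton a) (by rw [smul_eq_mul, hpa])
    (by rw [jacobson_eq_maximalIdeal ⊥ bot_ne_top]; exact le_maximalIdeal hp'.ne_top)
  simpa using this

end LocalRing

end

theorem stmt7 {R : Type*} [CommRing R] [IsLocalRing R] [IsReduced R] (n : ℕ) (hn : 0 < n)
    (h : ∀ x : R, Ideal.span {x} ≠ ⊤ → HasNOAFactorization n (Ideal.span {x}))
    (hdim : 2 ≤ ringKrullDim R) :
    ∃ _ : IsDomain R, UniqueFactorizationMonoid R := by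
  have hfac {I : Ideal R} (hI : I ≠ ⊤) {x : R} (hx : x ∈ I) :
      HasNOAFactorization n (span {x}) :=
    h x (ne_top_of_le_ne_top hI ((span_singleton_le_iff_mem I).mpr hx))
  obtain ⟨q, hq, hqmax, hqmin⟩ := exists_isPrime_not_isMaximal_forall_not_le_minimalPrimes hdim
  have hqm : q ≠ maximalIdeal R := fun hqm => hqmax (hqm ▸ maximalIdeal.isMaximal R)
  have hfin : (minimalPrimes R).Finite :=
    minimalPrimes_finite_of_hasNOAFactorization_bot hn (by simpa using hfac bot_ne_top rfl)
      fun hm => hqmin _ hm (le_maximalIdeal hq.ne_top)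
  obtain ⟨y, hyq, hy⟩ := exists_mem_nonZeroDivisors_of_forall_not_le hfin hqmin
  obtain ⟨p, hpq, hp, hpreg⟩ := exists_prime_mem_of_hasNOAFactorization hn hqm hyq hy
    (hfac hq.ne_top hyq)
  have := isDomain_of_prime_mem_nonZeroDivisors hn h hqm hpq hp hpreg
  refine ⟨this, UniqueFactorizationMonoid.iff_exists_prime_mem_of_isPrime.mpr
    fun P hP0 hP => ?_⟩
  by_cases hPm : P = maximalIdeal R
  · exact ⟨p, hPm ▸ le_maximalIdeal hq.ne_top hpq, hp⟩
  · obtain ⟨a, haP, ha0⟩ := Submodule.exists_mem_ne_zero_of_ne_bot hP0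
    obtain ⟨c, hcP, hc, -⟩ := exists_prime_mem_of_hasNOAFactorization hn hPm haP
      (mem_nonZeroDivisors_of_ne_zero ha0) (hfac hP.ne_top haP)
    exact ⟨c, hcP, hc⟩
end

section
/- If R is an n-OAF ring and I is a proper ideal of R, then the quotient ring R/I is an n-OAF ring. -/
/-!
An ideal `J` containing the kernel of a surjection `f : R → S` satisfies `f⁻¹(f J) = J`, so
nonunits of `S` lift to nonunits of `R` and the `n`-OA property of `J` transports to `f J`.
A proper ideal `K` of `S` then has the factorization `K = f (f⁻¹ K) = ∏ f (J i)` obtained from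
one of `f⁻¹ K = ∏ J i`, every factor of which contains the kernel.
-/

namespace IsNOAIdeal

variable {R S : Type*} [CommRing R] [CommRing S] {n : ℕ} {J : Ideal R}

theorem map_of_surjective (hJ : IsNOAIdeal n J) {f : R →+* S} (hf : Function.Surjective f)
    (hker : RingHom.ker f ≤ J) : IsNOAIdeal n (J.map f) := by
  have hcomap : (J.map f).comap f = J := by
    rw [Ideal.comap_map_of_surjective' f hf, sup_eq_left.mpr hker]
  refine ⟨fun htop => hJ.1 ?_, fun b hb hprod => ?_⟩
  · rw [← hcomap, htop, Ideal.comap_top]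
  choose a ha using fun i => hf (b i)
  have ha_nonunit : ∀ i, ¬IsUnit (a i) := fun i hu => hb i (ha i ▸ hu.map f)
  have ha_prod : (∏ i, a i) ∈ J := by
    rw [← hcomap, Ideal.mem_comap, map_prod]
    simpa only [ha] using hprod
  rcases hJ.2 a ha_nonunit ha_prod with hinit | hlast
  · left
    simpa only [map_prod, ha] using Ideal.mem_map_of_mem f hinit
  · right
    simpa only [ha] using Ideal.mem_map_of_mem f hlast

end IsNOAIdeal

theorem HasNOAFactorization.map_comap_of_surjective {R S : Type*} [CommRing R] [CommRing S]
    {n : ℕ} {f : R →+* S} (hf : Function.Surjective f) {K : Ideal S}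
    (hK : HasNOAFactorization n (K.comap f)) : HasNOAFactorization n K := by
  obtain ⟨m, J, hm, hJ, hprod⟩ := hK
  have hker : ∀ i, RingHom.ker f ≤ J i := fun i =>
    calc RingHom.ker f ≤ K.comap f := Ideal.ker_le_comap f
      _ = ∏ j, J j := hprod
      _ ≤ J i := Ideal.prod_le_inf.trans (Finset.inf_le (Finset.mem_univ i))
  refine ⟨m, fun i => (J i).map f, hm, fun i => (hJ i).map_of_surjective hf (hker i), ?_⟩
  rw [← Ideal.map_comap_of_surjective f hf K, hprod]
  exact map_prod (Ideal.mapHom f) J Finset.univ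

theorem IsNOAFRing.of_surjective {R S : Type*} [CommRing R] [CommRing S] {n : ℕ}
    (hR : IsNOAFRing R n) {f : R →+* S} (hf : Function.Surjective f) : IsNOAFRing S n :=
  fun _ hK => (hR _ (Ideal.comap_ne_top f hK)).map_comap_of_surjective hf

theorem stmt10_general {R : Type*} [CommRing R] (n : ℕ)
    (hR : IsNOAFRing R n) (I : Ideal R) :
    IsNOAFRing (R ⧸ I) n :=
  hR.of_surjective Ideal.Quotient.mk_surjective

theorem stmt10 {R : Type*} [CommRing R] [Nontrivial R] (n : ℕ) (hn : 0 < n)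
    (hR : IsNOAFRing R n) (I : Ideal R) (hI : I ≠ ⊤) :
    IsNOAFRing (R ⧸ I) n :=
  stmt10_general n hR I
end

section
/- If R is an n-OAF ring and S is a multiplicatively closed subset of R, then the localization S⁻¹R is an n-OAF ring. -/
/-!
Localization preserves factorizations: an ideal `I` of `S⁻¹R` is the extension of its contraction
`I ∩ R = J₁ ⋯ Jₘ`, so `I = S⁻¹J₁ ⋯ S⁻¹Jₘ`, and the factors that become the unit ideal
can be dropped.
Each remaining `S⁻¹Jᵢ` is again `n`-OA: writing `aₖ = rₖ / sₖ` with nonunits `rₖ`, a relation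
`a₁ ⋯ aₙ₊₁ ∈ S⁻¹J` means `t r₁ ⋯ rₙ₊₁ ∈ J` for some `t ∈ S`, and the `n`-OA property of `J` applied
to the nonunits `r₁, …, rₙ, t rₙ₊₁` gives the claim.
-/

open IsLocalization

theorem hasNOAFactorization_of_eq_finset_prod {R ι : Type*} [CommRing R] {n : ℕ} {t : Finset ι}
    (ht : t.Nonempty) {I : Ideal R} {J : ι → Ideal R} (hJ : ∀ i ∈ t, IsNOAIdeal n (J i))
    (hI : I = ∏ i ∈ t, J i) : HasNOAFactorization n I :=
  ⟨t.card, fun k ↦ J (t.equivFin.symm k), ht.card_pos, fun k ↦ hJ _ (t.equivFin.symm k).2, by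
    rw [hI, ← Finset.prod_coe_sort]
    exact (Equiv.prod_comp t.equivFin.symm _).symm⟩

section Localization

variable {R A : Type*} [CommRing R] [CommRing A] [Algebra R A] {M : Submonoid R}

theorem not_isUnit_of_mul_algebraMap_eq {x : A} {r : R} {s : M}
    (h : x * algebraMap R A s = algebraMap R A r) (hx : ¬IsUnit x) : ¬IsUnit r := fun hr ↦
  hx (isUnit_of_mul_isUnit_left (h ▸ hr.map (algebraMap R A)))

theorem prod_mul_algebraMap_eq {ι : Type*} [Fintype ι] {a : ι → A} {r : ι → R} {s : ι → M}
    (h : ∀ i, a i * algebraMap R A (s i) = algebraMap R A (r i)) :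
    (∏ i, a i) * algebraMap R A ↑(∏ i, s i) = algebraMap R A (∏ i, r i) := by
  simp only [Submonoid.coe_finsetProd, map_prod, ← Finset.prod_mul_distrib, h]

theorem mem_map_algebraMap_iff_of_mul_eq [IsLocalization M A] {J : Ideal R} {x : A} {r : R}
    {s : M} (h : x * algebraMap R A s = algebraMap R A r) :
    x ∈ J.map (algebraMap R A) ↔ ∃ m ∈ M, m * r ∈ J := by
  rw [← Ideal.mul_unit_mem_iff_mem _ (map_units A s), h, algebraMap_mem_map_algebraMap_iff M]

theorem IsNOAIdeal.map_algebraMap (M : Submonoid R) [IsLocalization M A] {n : ℕ} {J : Ideal R}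
    (hJ : IsNOAIdeal n J) (hJA : J.map (algebraMap R A) ≠ ⊤) :
    IsNOAIdeal n (J.map (algebraMap R A)) := by
  refine ⟨hJA, fun a ha hprod ↦ ?_⟩
  choose p hp using fun i ↦ surj M (a i)
  obtain ⟨m, hm, hmJ⟩ := (mem_map_algebraMap_iff_of_mul_eq (prod_mul_algebraMap_eq hp)).1 hprod
  set b := Function.update (fun i ↦ (p i).1) (Fin.last n) (m * (p (Fin.last n)).1)
  have hb_castSucc (i : Fin n) : b i.castSucc = (p i.castSucc).1 :=
    Function.update_of_ne (Fin.castSucc_lt_last i).ne _ _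
  have hb_last : b (Fin.last n) = m * (p (Fin.last n)).1 := Function.update_self _ _ _
  have hb_prod : ∏ i, b i = m * ∏ i, (p i).1 := by
    rw [Fin.prod_univ_castSucc, Fin.prod_univ_castSucc (fun i ↦ (p i).1), hb_last]
    simp only [hb_castSucc]
    ring
  have hb_nonunit (i : Fin (n + 1)) : ¬IsUnit (b i) := by
    have hp_nonunit := not_isUnit_of_mul_algebraMap_eq (hp i) (ha i)
    by_cases hi : i = Fin.last n
    · subst hi
      rw [hb_last]
      exact fun hu ↦ hp_nonunit (isUnit_of_mul_isUnit_right hu)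
    · rwa [show b i = (p i).1 from Function.update_of_ne hi _ _]
  rcases hJ.2 b hb_nonunit (hb_prod ▸ hmJ) with h | h
  · refine .inl <| (mem_map_algebraMap_iff_of_mul_eq
      (prod_mul_algebraMap_eq fun i : Fin n ↦ hp i.castSucc)).2 ⟨1, M.one_mem, ?_⟩
    simpa only [hb_castSucc, one_mul] using h
  · exact .inr <| (mem_map_algebraMap_iff_of_mul_eq (hp _)).2 ⟨m, hm, hb_last ▸ h⟩

theorem IsNOAFRing.of_isLocalization (M : Submonoid R) [IsLocalization M A] {n : ℕ}
    (hR : IsNOAFRing R n) : IsNOAFRing A n := by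
  classical
  intro I hI
  obtain ⟨m, J, -, hJ, hIJ⟩ := hR (I.comap (algebraMap R A)) (Ideal.comap_ne_top _ hI)
  set t := Finset.univ.filter fun i ↦ (J i).map (algebraMap R A) ≠ 1
  have hI_eq : I = ∏ i ∈ t, (J i).map (algebraMap R A) := by
    rw [Finset.prod_filter_ne_one, ← map_under M A I, Ideal.under, hIJ]
    exact map_prod (Ideal.mapHom (algebraMap R A)) J _
  have ht : t.Nonempty := by
    by_contra ht
    rw [Finset.not_nonempty_iff_eq_empty.1 ht, Finset.prod_empty, Ideal.one_eq_top] at hI_eq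
    exact hI hI_eq
  refine hasNOAFactorization_of_eq_finset_prod ht (fun i hi ↦ (hJ i).map_algebraMap M ?_) hI_eq
  simpa only [Ideal.one_eq_top] using (Finset.mem_filter.1 hi).2

end Localization

theorem stmt11_general {R : Type*} [CommRing R] (n : ℕ)
    (S : Submonoid R) (hR : IsNOAFRing R n) :
    IsNOAFRing (Localization S) n :=
  hR.of_isLocalization S

theorem stmt11 {R : Type*} [CommRing R] [Nontrivial R] (n : ℕ) (hn : 0 < n)
    (S : Submonoid R) (hS : (0 : R) ∉ S) (hR : IsNOAFRing R n) :
    IsNOAFRing (Localization S) n :=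
  stmt11_general n S hR
end

section
/- Let A and B be commutative rings and R = A × B. Then R is an n-OAF ring if and only if both A and B are general ZPI-rings. -/
section NOAIdeal

variable {R : Type*} [CommRing R]

theorem Ideal.IsPrime.isNOAIdeal_s12 {P : Ideal R} (hP : P.IsPrime) (n : ℕ) : IsNOAIdeal n P := by
  refine ⟨hP.ne_top, fun a _ ha => ?_⟩
  rw [Fin.prod_univ_castSucc] at ha
  exact hP.mem_or_mem ha

theorem IsNOAIdeal.mem_or_mem_of_mul_eq_self {n : ℕ} (hn : 0 < n) {I : Ideal R}
    (hI : IsNOAIdeal n I) {x e y : R} (hx : ¬IsUnit x) (he : ¬IsUnit e) (hy : ¬IsUnit y)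
    (hxe : x * e = x) (hxy : x * y ∈ I) : x ∈ I ∨ y ∈ I := by
  obtain ⟨m, rfl⟩ : ∃ m, n = m + 1 := Nat.exists_eq_add_one.mpr hn
  have hxe_pow : ∀ k : ℕ, x * e ^ k = x := by
    intro k
    induction k with
    | zero => simp
    | succ k ih => rw [pow_succ, ← mul_assoc, ih, hxe]
  have hprod : ∏ i, (Fin.cons x fun _ : Fin m => e : Fin (m + 1) → R) i = x := by
    rw [Fin.prod_univ_succ]
    simp [hxe_pow]
  have key := hI.2 (Fin.snoc (Fin.cons x fun _ : Fin m => e) y) ?_ ?_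
  · simpa only [Fin.snoc_castSucc, Fin.snoc_last, hprod] using key
  · intro i
    refine Fin.lastCases ?_ (fun j => ?_) i
    · simpa using hy
    · refine Fin.cases ?_ (fun k => ?_) j <;>
        simpa only [Fin.snoc_castSucc, Fin.cons_zero, Fin.cons_succ]
  · rw [Fin.prod_univ_castSucc]
    simpa only [Fin.snoc_castSucc, Fin.snoc_last, hprod] using hxy

theorem IsNOAIdeal.isPrime_of_isIdempotentElem {n : ℕ} (hn : 0 < n) {I : Ideal R}
    (hI : IsNOAIdeal n I) {e : R} (he : IsIdempotentElem e) (he₀ : ¬IsUnit e)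
    (he₁ : ¬IsUnit (1 - e)) : I.IsPrime := by
  wlog h : 1 - e ∈ I generalizing e
  · refine this he.one_sub he₁ (by rwa [sub_sub_cancel]) ?_
    rw [sub_sub_cancel]
    exact (hI.mem_or_mem_of_mul_eq_self hn he₀ he₀ he₁ he.eq
      (he.mul_one_sub_self ▸ I.zero_mem)).resolve_right h
  refine Ideal.isPrime_iff.mpr ⟨hI.1, fun {x y} hxy => ?_⟩
  have hnu : ∀ z, ¬IsUnit (z * e) := fun z hz => he₀ (isUnit_of_mul_isUnit_right hz)
  have hmem_of_mul_mem : ∀ z, z * e ∈ I → z ∈ I := fun z hz => by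
    simpa [← mul_add] using I.add_mem hz (I.mul_mem_left z h)
  have hxy' : x * e * (y * e) ∈ I := by
    rw [show x * e * (y * e) = x * y * (e * e) by ring, he.eq]
    exact I.mul_mem_right e hxy
  rcases hI.mem_or_mem_of_mul_eq_self hn (hnu x) he₀ (hnu y) (by rw [mul_assoc, he.eq]) hxy'
    with hx | hy
  · exact .inl (hmem_of_mul_mem x hx)
  · exact .inr (hmem_of_mul_mem y hy)

end NOAIdeal

theorem isNOAFRing_iff_isGeneralZPIRing {R : Type*} [CommRing R] {n : ℕ}
    (h : ∀ I : Ideal R, IsNOAIdeal n I ↔ I.IsPrime) : IsNOAFRing R n ↔ IsGeneralZPIRing R := by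
  simp only [IsNOAFRing, HasNOAFactorization, IsGeneralZPIRing, h]

theorem Ideal.top_mem_closure_isPrime {R : Type*} [CommRing R] :
    (⊤ : Ideal R) ∈ Submonoid.closure {P : Ideal R | P.IsPrime} :=
  Ideal.one_eq_top (R := R) ▸ one_mem _

theorem isGeneralZPIRing_iff_mem_closure {R : Type*} [CommRing R] :
    IsGeneralZPIRing R ↔ ∀ I : Ideal R, I ∈ Submonoid.closure {P : Ideal R | P.IsPrime} := by
  constructor
  · intro h I
    by_cases hI : I = ⊤
    · exact hI ▸ Ideal.top_mem_closure_isPrime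
    obtain ⟨m, J, -, hJ, rfl⟩ := h I hI
    exact Submonoid.prod_mem _ fun i _ => Submonoid.subset_closure (hJ i)
  · intro h I hI
    obtain ⟨l, hl, rfl⟩ := Submonoid.exists_list_of_mem_closure (h I)
    have hl_ne : l ≠ [] := by
      rintro rfl
      exact hI Ideal.one_eq_top
    exact ⟨l.length, fun i => l[i], List.length_pos_of_ne_nil hl_ne,
      fun i => hl _ (List.getElem_mem _), (Fin.prod_univ_getElem l).symm⟩

theorem IsGeneralZPIRing.of_surjective {R S : Type*} [CommRing R] [CommRing S] (f : R →+* S)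
    (hf : Function.Surjective f)
    (hmap : ∀ P : Ideal R, P.IsPrime → (P.map f).IsPrime ∨ P.map f = ⊤)
    (hR : IsGeneralZPIRing R) : IsGeneralZPIRing S := by
  rw [isGeneralZPIRing_iff_mem_closure] at hR ⊢
  intro J
  rw [← Ideal.map_comap_of_surjective f hf J]
  have hmem := Submonoid.mem_map_of_mem (Ideal.mapHom f : Ideal R →* Ideal S) (hR (J.comap f))
  rw [MonoidHom.map_mclosure] at hmem
  refine Submonoid.closure_le.mpr ?_ hmem
  rintro _ ⟨P, hP, rfl⟩
  rcases hmap P hP with hprime | htop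
  · exact Submonoid.subset_closure hprime
  · exact (htop ▸ Ideal.top_mem_closure_isPrime :)

section ProdRing

variable {A B : Type*} [CommRing A] [CommRing B]

theorem Ideal.prod_mul_prod (I I' : Ideal A) (J J' : Ideal B) :
    I.prod J * I'.prod J' = (I * I').prod (J * J') := by
  rw [Ideal.ideal_prod_eq (I.prod J * I'.prod J'), Ideal.map_mul, Ideal.map_mul]
  simp

theorem Ideal.prod_mem_closure_isPrime {I : Ideal A} {J : Ideal B}
    (hI : I ∈ Submonoid.closure {P : Ideal A | P.IsPrime})
    (hJ : J ∈ Submonoid.closure {Q : Ideal B | Q.IsPrime}) :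
    I.prod J ∈ Submonoid.closure {P : Ideal (A × B) | P.IsPrime} := by
  rw [show I.prod J = I.prod ⊤ * (⊤ : Ideal A).prod J by
    rw [Ideal.prod_mul_prod, Ideal.mul_top, Ideal.top_mul]]
  refine mul_mem ?_ ?_
  · induction hI using Submonoid.closure_induction with
    | mem P hP => exact Submonoid.subset_closure (Ideal.isPrime_ideal_prod_top (h := hP))
    | one => simpa only [Ideal.one_eq_top, Ideal.prod_top_top] using Ideal.top_mem_closure_isPrime
    | mul P Q _ _ hP hQ => simpa only [Ideal.prod_mul_prod, Ideal.top_mul] using mul_mem hP hQ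
  · induction hJ using Submonoid.closure_induction with
    | mem Q hQ => exact Submonoid.subset_closure (Ideal.isPrime_ideal_prod_top' (h := hQ))
    | one => simpa only [Ideal.one_eq_top, Ideal.prod_top_top] using Ideal.top_mem_closure_isPrime
    | mul P Q _ _ hP hQ => simpa only [Ideal.prod_mul_prod, Ideal.top_mul] using mul_mem hP hQ

theorem isGeneralZPIRing_prod_iff :
    IsGeneralZPIRing (A × B) ↔ IsGeneralZPIRing A ∧ IsGeneralZPIRing B := by
  constructor
  · intro h
    refine ⟨h.of_surjective (RingHom.fst A B) Prod.fst_surjective ?_,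
      h.of_surjective (RingHom.snd A B) Prod.snd_surjective ?_⟩ <;>
    · intro P hP
      rcases (Ideal.ideal_prod_prime P).1 hP with ⟨p, hp, rfl⟩ | ⟨p, hp, rfl⟩ <;> simp [hp]
  · rintro ⟨hA, hB⟩
    rw [isGeneralZPIRing_iff_mem_closure] at hA hB ⊢
    intro I
    rw [Ideal.ideal_prod_eq I]
    exact Ideal.prod_mem_closure_isPrime (hA _) (hB _)

end ProdRing

theorem stmt12 {A B : Type*} [CommRing A] [CommRing B] [Nontrivial A] [Nontrivial B]
    (n : ℕ) (hn : 0 < n) :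
    IsNOAFRing (A × B) n ↔ (IsGeneralZPIRing A ∧ IsGeneralZPIRing B) := by
  have he : IsIdempotentElem ((1, 0) : A × B) := by ext <;> simp
  have he₀ : ¬IsUnit ((1, 0) : A × B) := fun h =>
    not_isUnit_zero (M₀ := B) (by simpa using h.map (RingHom.snd A B))
  have he₁ : ¬IsUnit (1 - (1, 0) : A × B) := fun h =>
    not_isUnit_zero (M₀ := A) (by simpa using h.map (RingHom.fst A B))
  rw [← isGeneralZPIRing_prod_iff]
  exact isNOAFRing_iff_isGeneralZPIRing fun I =>
    ⟨fun hI => hI.isPrime_of_isIdempotentElem hn he he₀ he₁, fun hP => hP.isNOAIdeal_s12 n⟩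
end

section
/- Let R be a commutative ring and M a maximal ideal of R. The ideal M + X·R[[X]] of the power series ring R[[X]] is a simple ideal if and only if M² = M. -/
/-!
Write `P = M + X·R⟦X⟧`. A power series lies in `P²` exactly when its constant coefficient lies
in `M²` and its coefficient of `X` lies in `M`. If `M² ≠ M`, the ideal of series with constant
coefficient in `M²` lies strictly between `P²` (it contains `X`) and `P`. If `M² = M`, an ideal
`P² ≤ J ≤ P` either has all its `X`-coefficients in `M`, and then `J = P²`, or contains a series
whose `X`-coefficient is invertible modulo `M`; rescaling it and subtracting an element of `P²`
puts `X` into `J`, and then `J = P`.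
-/

open PowerSeries

namespace PowerSeries

variable {R : Type*} [CommRing R] (M : Ideal R)

theorem C_mem_comap_constantCoeff_sq {a : R} (ha : a ∈ M ^ 2) :
    C a ∈ (M.comap (constantCoeff (R := R))) ^ 2 := by
  have hCM : M.map (C (R := R)) ≤ M.comap constantCoeff :=
    Ideal.map_le_iff_le_comap.mpr fun x hx ↦ by simpa using hx
  have := Ideal.mem_map_of_mem (C (R := R)) ha
  rw [Ideal.map_pow] at this
  exact Ideal.pow_right_mono hCM 2 this

theorem X_mul_mem_comap_constantCoeff_sq {g : R⟦X⟧} (hg : constantCoeff g ∈ M) :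
    X * g ∈ (M.comap (constantCoeff (R := R))) ^ 2 := by
  rw [pow_two]
  exact Ideal.mul_mem_mul (by simp) hg

theorem mem_comap_constantCoeff_sq_iff {f : R⟦X⟧} :
    f ∈ (M.comap (constantCoeff (R := R))) ^ 2 ↔ constantCoeff f ∈ M ^ 2 ∧ coeff 1 f ∈ M := by
  constructor
  · intro hf
    refine ⟨?_, ?_⟩
    · have := Ideal.mem_map_of_mem (constantCoeff (R := R)) hf
      rw [Ideal.map_pow] at this
      exact Ideal.pow_right_mono Ideal.map_comap_le 2 this
    · rw [pow_two] at hf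
      refine Submodule.mul_induction_on hf (fun g hg h hh ↦ ?_) (fun g h hg hh ↦ ?_)
      · rw [coeff_one_mul]
        exact M.add_mem (M.mul_mem_left _ hh) (M.mul_mem_left _ hg)
      · rw [map_add]
        exact M.add_mem hg hh
  · rintro ⟨hf0, hf1⟩
    rw [eq_X_mul_shift_add_const f]
    exact Ideal.add_mem _ (X_mul_mem_comap_constantCoeff_sq M (by simpa using hf1))
      (C_mem_comap_constantCoeff_sq M hf0)

theorem X_mem_of_coeff_one_notMem {J : Ideal R⟦X⟧} (hM : M.IsMaximal)
    (hPJ : (M.comap (constantCoeff (R := R))) ^ 2 ≤ J) {f : R⟦X⟧} (hfJ : f ∈ J)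
    (hf0 : constantCoeff f ∈ M ^ 2) (hf1 : coeff 1 f ∉ M) : X ∈ J := by
  obtain ⟨s, m, hm, hsm⟩ := hM.exists_inv hf1
  have hdiff : C s * f - X ∈ (M.comap (constantCoeff (R := R))) ^ 2 := by
    rw [mem_comap_constantCoeff_sq_iff]
    refine ⟨by simpa using Ideal.mul_mem_left _ s hf0, ?_⟩
    have : s * coeff 1 f - 1 = -m := by rw [← hsm]; ring
    simpa [coeff_one_mul, this] using M.neg_mem hm
  simpa using J.sub_mem (J.mul_mem_left (C s) hfJ) (hPJ hdiff)

end PowerSeries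

theorem stmt15_general {R : Type*} [CommRing R] (M : Ideal R) (hM : M.IsMaximal) :
    (∀ J : Ideal (PowerSeries R),
        (M.comap (PowerSeries.constantCoeff (R := R))) ^ 2 ≤ J →
        J ≤ M.comap (PowerSeries.constantCoeff (R := R)) →
        J = (M.comap (PowerSeries.constantCoeff (R := R))) ^ 2 ∨
          J = M.comap (PowerSeries.constantCoeff (R := R))) ↔
      M ^ 2 = M := by
  set P : Ideal R⟦X⟧ := M.comap constantCoeff
  have hXP2 : (X : R⟦X⟧) ∉ P ^ 2 := fun h ↦
    hM.ne_top (M.eq_top_of_isUnit_mem (by simpa using ((mem_comap_constantCoeff_sq_iff M).mp h).2)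
      isUnit_one)
  constructor
  · intro hsimple
    have hP2Q : P ^ 2 ≤ (M ^ 2).comap constantCoeff := fun f hf ↦
      ((mem_comap_constantCoeff_sq_iff M).mp hf).1
    rcases hsimple _ hP2Q (Ideal.comap_mono (Ideal.pow_le_self two_ne_zero)) with h | h
    · exact absurd (h ▸ (by simp : X ∈ (M ^ 2).comap constantCoeff)) hXP2
    · exact Ideal.comap_injective_of_surjective _ constantCoeff_surj h
  · intro hM2 J hPJ hJP
    by_cases hJ1 : ∀ f ∈ J, coeff 1 f ∈ M
    · refine .inl (le_antisymm (fun f hf ↦ ?_) hPJ)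
      exact (mem_comap_constantCoeff_sq_iff M).mpr ⟨hM2.symm ▸ hJP hf, hJ1 f hf⟩
    push Not at hJ1
    obtain ⟨f, hfJ, hf1⟩ := hJ1
    have hXJ : X ∈ J := X_mem_of_coeff_one_notMem M hM hPJ hfJ (hM2.symm ▸ hJP hfJ) hf1
    refine .inr (le_antisymm hJP fun g hg ↦ ?_)
    rw [eq_X_mul_shift_add_const g]
    exact J.add_mem (J.mul_mem_right _ hXJ)
      (hPJ (C_mem_comap_constantCoeff_sq M (hM2.symm ▸ hg)))

theorem stmt15 {R : Type*} [CommRing R] [Nontrivial R] (M : Ideal R) (hM : M.IsMaximal) :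
    (∀ J : Ideal (PowerSeries R),
        (M.comap (PowerSeries.constantCoeff (R := R))) ^ 2 ≤ J →
        J ≤ M.comap (PowerSeries.constantCoeff (R := R)) →
        J = (M.comap (PowerSeries.constantCoeff (R := R))) ^ 2 ∨
          J = M.comap (PowerSeries.constantCoeff (R := R))) ↔
      M ^ 2 = M :=
  stmt15_general M hM
end
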